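/- arXiv:1605.06663 — 7 statements merged into one kernel-verified Lean document; each statement's English description precedes it below -/
import Mathlib

section
/- Define h : ℤ → ℝ by h(j) = j² / log(|j| + e). Then for all integers j and l, |h(j) - h(j-l)| ≤ 3|l|²/log(|l|+e) + 3|l||j-l|/log(|j-l|+e). -/
/-!
With `L x = log (x + e) ≥ 1`, both `x ↦ x / L x` and `g x = x² / L x` are monotone on `[0, ∞)`
(the first because `x (L y - L x) ≤ x (y - x) / (x + e) ≤ (y - x) L x` for `x ≤ y`).
For `a = |j|`, `b = |j - l|`, `c = |l|` we have `|a - b| ≤ c`. If `a ≤ b`, then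
`g b - g a ≤ (b² - a²) / L b ≤ 2cb / L b`. If `b ≤ a`, then
`g a - g b ≤ (a² - b²) / L a ≤ c · a / L a + c · b / L b`, and
`a / L a ≤ (b + c) / L (b + c) ≤ b / L b + c / L c`.
-/

namespace Real

lemma one_le_log_add_exp_one {x : ℝ} (hx : 0 ≤ x) : 1 ≤ log (x + exp 1) := by
  simpa using log_le_log (exp_pos 1) (show exp 1 ≤ x + exp 1 by linarith)

lemma log_add_exp_one_pos {x : ℝ} (hx : 0 ≤ x) : 0 < log (x + exp 1) :=
  one_pos.trans_le (one_le_log_add_exp_one hx)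

lemma log_add_exp_one_le_log_add_exp_one {x y : ℝ} (hx : 0 ≤ x) (hxy : x ≤ y) :
    log (x + exp 1) ≤ log (y + exp 1) :=
  log_le_log (by positivity) (by linarith)

lemma log_add_exp_one_sub_le {x y : ℝ} (hx : 0 ≤ x) (hxy : x ≤ y) :
    log (y + exp 1) - log (x + exp 1) ≤ (y - x) / (x + exp 1) := by
  have hx' : 0 < x + exp 1 := by positivity
  have hy' : 0 < y + exp 1 := by linarith
  calc log (y + exp 1) - log (x + exp 1) = log ((y + exp 1) / (x + exp 1)) :=
        (log_div hy'.ne' hx'.ne').symm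
    _ ≤ (y + exp 1) / (x + exp 1) - 1 := log_le_sub_one_of_pos (by positivity)
    _ = (y - x) / (x + exp 1) := by field_simp; ring

lemma mul_log_add_exp_one_le {x y : ℝ} (hx : 0 ≤ x) (hxy : x ≤ y) :
    x * log (y + exp 1) ≤ y * log (x + exp 1) := by
  have hx' : 0 < x + exp 1 := by positivity
  have hL := one_le_log_add_exp_one hx
  have hfrac : x * ((y - x) / (x + exp 1)) ≤ y - x := by
    rw [mul_div_assoc', div_le_iff₀ hx']
    nlinarith [exp_pos 1]
  calc x * log (y + exp 1)
      ≤ x * log (x + exp 1) + x * ((y - x) / (x + exp 1)) := by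
        nlinarith [log_add_exp_one_sub_le hx hxy]
    _ ≤ x * log (x + exp 1) + (y - x) * log (x + exp 1) := by nlinarith
    _ = y * log (x + exp 1) := by ring

lemma div_log_add_exp_one_le {x y : ℝ} (hx : 0 ≤ x) (hxy : x ≤ y) :
    x / log (x + exp 1) ≤ y / log (y + exp 1) := by
  rw [div_le_div_iff₀ (log_add_exp_one_pos hx) (log_add_exp_one_pos (hx.trans hxy))]
  exact mul_log_add_exp_one_le hx hxy

lemma div_log_add_exp_one_add_le {x y : ℝ} (hx : 0 ≤ x) (hy : 0 ≤ y) :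
    (x + y) / log (x + y + exp 1) ≤ x / log (x + exp 1) + y / log (y + exp 1) := by
  rw [add_div]
  gcongr
  · exact log_add_exp_one_pos hx
  · linarith
  · exact log_add_exp_one_pos hy
  · linarith

lemma sq_div_log_add_exp_one_le {x y : ℝ} (hx : 0 ≤ x) (hxy : x ≤ y) :
    x ^ 2 / log (x + exp 1) ≤ y ^ 2 / log (y + exp 1) := by
  rw [sq, sq, mul_div_assoc, mul_div_assoc]
  exact mul_le_mul hxy (div_log_add_exp_one_le hx hxy)
    (div_nonneg hx (log_add_exp_one_pos hx).le) (hx.trans hxy)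

lemma sq_div_log_add_exp_one_sub_le_of_le {a b c : ℝ} (ha : 0 ≤ a) (hc : 0 ≤ c)
    (hab : a ≤ b) (hba : b ≤ a + c) :
    b ^ 2 / log (b + exp 1) - a ^ 2 / log (a + exp 1) ≤ 2 * c * b / log (b + exp 1) := by
  have hLa := log_add_exp_one_pos ha
  have hLb := log_add_exp_one_pos (ha.trans hab)
  have hLab := log_add_exp_one_le_log_add_exp_one ha hab
  calc b ^ 2 / log (b + exp 1) - a ^ 2 / log (a + exp 1)
      ≤ b ^ 2 / log (b + exp 1) - a ^ 2 / log (b + exp 1) := by gcongr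
    _ = (b ^ 2 - a ^ 2) / log (b + exp 1) := by ring
    _ ≤ 2 * c * b / log (b + exp 1) := by gcongr; nlinarith

lemma sq_div_log_add_exp_one_sub_le_of_ge {a b c : ℝ} (hb : 0 ≤ b) (hc : 0 ≤ c)
    (hba : b ≤ a) (hab : a ≤ b + c) :
    a ^ 2 / log (a + exp 1) - b ^ 2 / log (b + exp 1) ≤
      c ^ 2 / log (c + exp 1) + 2 * c * b / log (b + exp 1) := by
  have ha := hb.trans hba
  have hLa := log_add_exp_one_pos ha
  have hLb := log_add_exp_one_pos hb
  have hLab := log_add_exp_one_le_log_add_exp_one hb hba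
  have ha_div : a / log (a + exp 1) ≤ b / log (b + exp 1) + c / log (c + exp 1) :=
    (div_log_add_exp_one_le ha hab).trans (div_log_add_exp_one_add_le hb hc)
  calc a ^ 2 / log (a + exp 1) - b ^ 2 / log (b + exp 1)
      ≤ a ^ 2 / log (a + exp 1) - b ^ 2 / log (a + exp 1) := by gcongr
    _ = (a ^ 2 - b ^ 2) / log (a + exp 1) := by ring
    _ ≤ (c * a + c * b) / log (a + exp 1) := by gcongr; nlinarith
    _ = c * (a / log (a + exp 1)) + c * b / log (a + exp 1) := by ring
    _ ≤ c * (b / log (b + exp 1) + c / log (c + exp 1)) + c * b / log (b + exp 1) := by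
        gcongr
    _ = c ^ 2 / log (c + exp 1) + 2 * c * b / log (b + exp 1) := by ring

lemma abs_sq_div_log_add_exp_one_sub_le {a b c : ℝ} (ha : 0 ≤ a) (hb : 0 ≤ b) (hc : 0 ≤ c)
    (hab : a ≤ b + c) (hba : b ≤ a + c) :
    |a ^ 2 / log (a + exp 1) - b ^ 2 / log (b + exp 1)| ≤
      3 * c ^ 2 / log (c + exp 1) + 3 * c * b / log (b + exp 1) := by
  have hcc : 0 ≤ c ^ 2 / log (c + exp 1) := div_nonneg (sq_nonneg c) (log_add_exp_one_pos hc).le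
  have hcb : 0 ≤ c * b / log (b + exp 1) :=
    div_nonneg (mul_nonneg hc hb) (log_add_exp_one_pos hb).le
  have e3 : 3 * c ^ 2 / log (c + exp 1) = 3 * (c ^ 2 / log (c + exp 1)) := by ring
  have e2 : 2 * c * b / log (b + exp 1) = 2 * (c * b / log (b + exp 1)) := by ring
  have e3' : 3 * c * b / log (b + exp 1) = 3 * (c * b / log (b + exp 1)) := by ring
  rcases le_total a b with h | h
  · rw [abs_sub_comm, abs_of_nonneg (sub_nonneg.mpr (sq_div_log_add_exp_one_le ha h))]
    linarith [sq_div_log_add_exp_one_sub_le_of_le ha hc h hba]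
  · rw [abs_of_nonneg (sub_nonneg.mpr (sq_div_log_add_exp_one_le hb h))]
    linarith [sq_div_log_add_exp_one_sub_le_of_ge hb hc h hab]

end Real

/-- difference estimate for h(j) = j² / log(|j| + e) on the integers. -/
theorem stmt_1 (h : ℤ → ℝ)
    (hh : ∀ j : ℤ, h j = (j : ℝ) ^ 2 / Real.log (|(j : ℝ)| + Real.exp 1)) :
    ∀ j l : ℤ,
      |h j - h (j - l)| ≤
        3 * |(l : ℝ)| ^ 2 / Real.log (|(l : ℝ)| + Real.exp 1) +
        3 * |(l : ℝ)| * |((j - l : ℤ) : ℝ)| / Real.log (|((j - l : ℤ) : ℝ)| + Real.exp 1) := by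
  intro j l
  rw [hh j, hh (j - l), ← sq_abs (j : ℝ), ← sq_abs ((j - l : ℤ) : ℝ), Int.cast_sub]
  refine Real.abs_sq_div_log_add_exp_one_sub_le (abs_nonneg _) (abs_nonneg _) (abs_nonneg _) ?_
    (abs_sub _ _)
  simpa using abs_add_le ((j : ℝ) - l) l
end

section
/- Let 𝓛 be the Fourier multiplier on L²(𝕋) satisfying 𝓛(f)^(0) = 0 and |𝓛(f)^(k)| ≤ C₀ log(2|k|)|f̂(k)| for k ≠ 0. Then for all p ≥ 1 and f ∈ H¹(𝕋), ‖𝓛(f)‖_{L²} ≤ C p ‖f‖_{L²}^{1−1/p} ‖∂_γ f‖_{L²}^{1/p}, where C depends only on C₀. -/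
/-!
By Parseval, all three `L²` norms are `ℓ²` norms of Fourier coefficients. Since
`log (2x) ≤ 2p x^{1/p}` and `|ĝ(k)| = |k| |f̂(k)|`, the multiplier bound gives pointwise
`|𝓛f^(k)| ≤ 2 C₀ p |f̂(k)|^{1-1/p} |ĝ(k)|^{1/p}`, and Hölder's inequality with exponents
`1 - 1/p` and `1/p` turns this into the same bound for the `ℓ²` norms.
-/

open Real MeasureTheory
open scoped ENNReal

instance : Fact ((0 : ℝ) < 2 * π) := ⟨by positivity⟩

theorem Real.log_two_mul_le_mul_rpow {x p : ℝ} (hx : 0 ≤ x) (hp : 1 ≤ p) :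
    log (2 * x) ≤ 2 * p * x ^ (1 / p) := by
  have hp0 : 0 < p := by linarith
  calc log (2 * x) ≤ (2 * x) ^ (1 / p) / (1 / p) :=
        log_le_rpow_div (by positivity) (by positivity)
    _ = p * 2 ^ (1 / p) * x ^ (1 / p) := by rw [mul_rpow (by norm_num) hx]; field_simp
    _ ≤ p * 2 * x ^ (1 / p) := by
      gcongr
      exact rpow_le_self_of_one_le one_le_two ((div_le_one hp0).2 hp)
    _ = 2 * p * x ^ (1 / p) := by ring

theorem Real.rpow_one_sub_mul_mul_rpow {x t θ : ℝ} (hx : 0 ≤ x) (ht : 0 ≤ t) :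
    x ^ (1 - θ) * (t * x) ^ θ = t ^ θ * x := by
  rw [mul_rpow ht hx, mul_left_comm, ← rpow_add' hx (by simp), sub_add_cancel, rpow_one]

theorem MeasureTheory.eLpNorm_le_ofReal_mul_eLpNorm_rpow_mul_eLpNorm_rpow {α E F G : Type*}
    [MeasurableSpace α] {μ : Measure α} [NormedAddCommGroup E] [NormedAddCommGroup F]
    [NormedAddCommGroup G] {p : ℝ≥0∞} (hp0 : p ≠ 0) (hp : p ≠ ∞) {a : α → E} {b : α → F}
    {c : α → G} (ha : AEStronglyMeasurable a μ) (hb : AEStronglyMeasurable b μ) {θ M : ℝ}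
    (hθ0 : 0 ≤ θ) (hθ1 : θ ≤ 1) (h : ∀ᵐ x ∂μ, ‖c x‖ ≤ M * ‖a x‖ ^ (1 - θ) * ‖b x‖ ^ θ) :
    eLpNorm c p μ ≤ ENNReal.ofReal M * eLpNorm a p μ ^ (1 - θ) * eLpNorm b p μ ^ θ := by
  have hr : 0 < p.toReal := ENNReal.toReal_pos hp0 hp
  have hθ1' : 0 ≤ 1 - θ := by linarith
  have h_enorm : ∀ᵐ x ∂μ, ‖c x‖ₑ ^ p.toReal ≤
      ENNReal.ofReal M ^ p.toReal *
        ((‖a x‖ₑ ^ p.toReal) ^ (1 - θ) * (‖b x‖ₑ ^ p.toReal) ^ θ) := by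
    filter_upwards [h] with x hx
    rw [← ENNReal.rpow_mul, ← ENNReal.rpow_mul, mul_comm p.toReal, mul_comm p.toReal,
      ENNReal.rpow_mul, ENNReal.rpow_mul, ← ENNReal.mul_rpow_of_nonneg _ _ hr.le,
      ← ENNReal.mul_rpow_of_nonneg _ _ hr.le]
    gcongr
    rw [← ofReal_norm, ← ofReal_norm, ← ofReal_norm,
      ENNReal.ofReal_rpow_of_nonneg (by positivity) hθ1',
      ENNReal.ofReal_rpow_of_nonneg (by positivity) hθ0,
      ← ENNReal.ofReal_mul (by positivity), ← ENNReal.ofReal_mul' (by positivity), ← mul_assoc]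
    exact ENNReal.ofReal_le_ofReal hx
  have h_lintegral : ∫⁻ x, ‖c x‖ₑ ^ p.toReal ∂μ ≤ ENNReal.ofReal M ^ p.toReal *
      ((∫⁻ x, ‖a x‖ₑ ^ p.toReal ∂μ) ^ (1 - θ) * (∫⁻ x, ‖b x‖ₑ ^ p.toReal ∂μ) ^ θ) := by
    have ha' : AEMeasurable (fun x => ‖a x‖ₑ ^ p.toReal) μ := ha.enorm.pow_const _
    have hb' : AEMeasurable (fun x => ‖b x‖ₑ ^ p.toReal) μ := hb.enorm.pow_const _
    calc ∫⁻ x, ‖c x‖ₑ ^ p.toReal ∂μ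
        ≤ ∫⁻ x, ENNReal.ofReal M ^ p.toReal *
            ((‖a x‖ₑ ^ p.toReal) ^ (1 - θ) * (‖b x‖ₑ ^ p.toReal) ^ θ) ∂μ :=
          lintegral_mono_ae h_enorm
      _ = ENNReal.ofReal M ^ p.toReal *
            ∫⁻ x, (‖a x‖ₑ ^ p.toReal) ^ (1 - θ) * (‖b x‖ₑ ^ p.toReal) ^ θ ∂μ :=
          lintegral_const_mul'' _ ((ha'.pow_const _).mul (hb'.pow_const _))
      _ ≤ _ := by
          gcongr
          exact ENNReal.lintegral_mul_norm_pow_le ha' hb' hθ1' hθ0 (by ring)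
  simp only [eLpNorm_eq_lintegral_rpow_enorm_toReal hp0 hp]
  calc (∫⁻ x, ‖c x‖ₑ ^ p.toReal ∂μ) ^ (1 / p.toReal)
      ≤ (ENNReal.ofReal M ^ p.toReal * ((∫⁻ x, ‖a x‖ₑ ^ p.toReal ∂μ) ^ (1 - θ) *
          (∫⁻ x, ‖b x‖ₑ ^ p.toReal ∂μ) ^ θ)) ^ (1 / p.toReal) := by
        gcongr
    _ = _ := by
      rw [ENNReal.mul_rpow_of_nonneg _ _ (by positivity),
        ENNReal.mul_rpow_of_nonneg _ _ (by positivity), ← ENNReal.rpow_mul,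
        mul_one_div_cancel hr.ne', ENNReal.rpow_one, ← ENNReal.rpow_mul, ← ENNReal.rpow_mul,
        ← ENNReal.rpow_mul, ← ENNReal.rpow_mul, mul_comm θ, mul_comm (1 - θ), mul_assoc]

theorem MeasureTheory.MemLp.eLpNorm_fourierCoeff_count {T : ℝ} [Fact (0 < T)]
    {f : AddCircle T → ℂ} (hf : MemLp f 2 AddCircle.haarAddCircle) :
    eLpNorm (fourierCoeff f) 2 Measure.count = eLpNorm f 2 AddCircle.haarAddCircle := by
  rw [← fourierCoeff_congr_ae hf.coeFn_toLp, ← eLpNorm_congr_ae hf.coeFn_toLp]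
  set F := hf.toLp f
  simp only [eLpNorm_eq_lintegral_rpow_enorm_toReal two_ne_zero ENNReal.ofNat_ne_top,
    ENNReal.toReal_ofNat, ENNReal.rpow_two, ← ofReal_norm, ← ENNReal.ofReal_pow (norm_nonneg _)]
  congr 1
  have parseval := hasSum_sq_fourierCoeff F
  rw [lintegral_count,
    ← ENNReal.ofReal_tsum_of_nonneg (fun _ => by positivity) parseval.summable, parseval.tsum_eq,
    ofReal_integral_eq_lintegral_ofReal]
  · exact (Lp.memLp F).integrable_norm_pow two_ne_zero
  · exact .of_forall fun _ => by positivity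

/-- interpolation bound ‖𝓛f‖_{L²} ≤ C p ‖f‖_{L²}^{1−1/p} ‖∂f‖_{L²}^{1/p}
    for a Fourier multiplier 𝓛 of logarithmic order. -/
theorem stmt_7 :
    ∀ C₀ : ℝ, 0 < C₀ → ∃ C : ℝ, 0 < C ∧
      ∀ p : ℝ, 1 ≤ p →
        ∀ f g Lf : AddCircle (2 * π) → ℂ,
          MemLp f 2 AddCircle.haarAddCircle →
          MemLp g 2 AddCircle.haarAddCircle →
          MemLp Lf 2 AddCircle.haarAddCircle →
          -- g is the derivative of f, characterized on the Fourier side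
          (∀ k : ℤ, fourierCoeff g k = (k : ℂ) * Complex.I * fourierCoeff f k) →
          -- 𝓛 has zero mean and logarithmic multiplier bounds
          fourierCoeff Lf 0 = 0 →
          (∀ k : ℤ, k ≠ 0 →
            ‖fourierCoeff Lf k‖ ≤ C₀ * Real.log (2 * |(k : ℝ)|) * ‖fourierCoeff f k‖) →
          eLpNorm Lf 2 AddCircle.haarAddCircle ≤
            ENNReal.ofReal (C * p) *
              (eLpNorm f 2 AddCircle.haarAddCircle) ^ (1 - 1 / p) *
              (eLpNorm g 2 AddCircle.haarAddCircle) ^ (1 / p) := by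
  intro C₀ hC₀
  refine ⟨2 * C₀, by positivity, fun p hp f g Lf hf hg hLf hderiv hmean hmult => ?_⟩
  have hpointwise : ∀ k : ℤ, ‖fourierCoeff Lf k‖ ≤
      2 * C₀ * p * ‖fourierCoeff f k‖ ^ (1 - 1 / p) * ‖fourierCoeff g k‖ ^ (1 / p) := by
    intro k
    rcases eq_or_ne k 0 with rfl | hk
    · rw [hmean, norm_zero]
      positivity
    calc ‖fourierCoeff Lf k‖ ≤ C₀ * log (2 * |(k : ℝ)|) * ‖fourierCoeff f k‖ := hmult k hk
      _ ≤ C₀ * (2 * p * |(k : ℝ)| ^ (1 / p)) * ‖fourierCoeff f k‖ := by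
        gcongr
        exact log_two_mul_le_mul_rpow (abs_nonneg _) hp
      _ = 2 * C₀ * p * ‖fourierCoeff f k‖ ^ (1 - 1 / p) * ‖fourierCoeff g k‖ ^ (1 / p) := by
        rw [hderiv, norm_mul, norm_mul, Complex.norm_I, mul_one, Complex.norm_intCast,
          mul_assoc (2 * C₀ * p), rpow_one_sub_mul_mul_rpow (norm_nonneg _) (abs_nonneg _)]
        ring
  calc eLpNorm Lf 2 AddCircle.haarAddCircle = eLpNorm (fourierCoeff Lf) 2 Measure.count :=
        hLf.eLpNorm_fourierCoeff_count.symm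
    _ ≤ ENNReal.ofReal (2 * C₀ * p) *
          eLpNorm (fourierCoeff f) 2 Measure.count ^ (1 - 1 / p) *
          eLpNorm (fourierCoeff g) 2 Measure.count ^ (1 / p) :=
        eLpNorm_le_ofReal_mul_eLpNorm_rpow_mul_eLpNorm_rpow two_ne_zero ENNReal.ofNat_ne_top
          .of_discrete .of_discrete (by positivity) (div_le_one_of_le₀ hp (by positivity))
          (.of_forall hpointwise)
    _ = _ := by rw [hf.eLpNorm_fourierCoeff_count, hg.eLpNorm_fourierCoeff_count]
end

section
/- Let z : [0,T] → [0,∞) be a continuously differentiable function with z(0) = 0 and suppose there is a constant C > 0 such that for every p ≥ 1, z'(t) ≤ C p z(t)^{1−1/p} for all t ∈ [0,T]. Then z(t) = 0 for all t ∈ [0, min(T, 1/(2C))]. -/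
/-!
For `p ≥ 1` and `ε > 0`, the inequality `z' ≤ C p z^(1 - 1/p)` says exactly that
`(z + ε)^(1/p)` grows with slope at most `C`. Starting from `z 0 = 0` this gives
`(z t + δ^p)^(1/p) ≤ δ + C t`, hence `z t ≤ (δ + C t)^p` for every `δ > 0`, and so
`z t ≤ (C t)^p`. When `C t < 1` the right-hand side tends to `0` as `p → ∞`.
-/

open Real Set Filter

lemma mul_rpow_sub_one_le_of_le_mul_rpow {x ε d C p : ℝ} (hx : 0 ≤ x) (hε : 0 < ε)
    (hp : 1 ≤ p) (hC : 0 ≤ C) (hd : d ≤ C * p * x ^ (1 - 1 / p)) :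
    d * (1 / p) * (x + ε) ^ (1 / p - 1) ≤ C := by
  have hy : 0 < x + ε := by linarith
  have hp0 : p ≠ 0 := by positivity
  have hd' : d ≤ C * p * (x + ε) ^ (1 - 1 / p) := by
    refine hd.trans ?_
    have : 0 ≤ 1 - 1 / p := by
      rw [sub_nonneg, div_le_one (by positivity)]
      exact hp
    gcongr
    linarith
  calc d * (1 / p) * (x + ε) ^ (1 / p - 1)
      ≤ C * p * (x + ε) ^ (1 - 1 / p) * (1 / p) * (x + ε) ^ (1 / p - 1) := by gcongr
    _ = C * (p * (1 / p)) * ((x + ε) ^ (1 - 1 / p) * (x + ε) ^ (1 / p - 1)) := by ring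
    _ = C := by
      rw [← rpow_add hy, mul_one_div_cancel hp0]
      simp

theorem add_rpow_one_div_le_of_deriv_le_mul_rpow {z z' : ℝ → ℝ} {a b C p ε : ℝ} (hab : a ≤ b)
    (hC : 0 ≤ C) (hp : 1 ≤ p) (hε : 0 < ε) (hznn : ∀ s ∈ Icc a b, 0 ≤ z s)
    (hderiv : ∀ s ∈ Icc a b, HasDerivAt z (z' s) s)
    (hineq : ∀ s ∈ Icc a b, z' s ≤ C * p * z s ^ (1 - 1 / p)) :
    (z b + ε) ^ (1 / p) ≤ (z a + ε) ^ (1 / p) + C * (b - a) := by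
  have hw : ∀ s ∈ Icc a b, HasDerivAt (fun s ↦ (z s + ε) ^ (1 / p))
      (z' s * (1 / p) * (z s + ε) ^ (1 / p - 1)) s := fun s hs ↦
    ((hderiv s hs).add_const ε).rpow_const (Or.inl (by linarith [hznn s hs]))
  have hmvt := (convex_Icc a b).image_sub_le_mul_sub_of_deriv_le
    (fun s hs ↦ (hw s hs).continuousAt.continuousWithinAt)
    (fun s hs ↦ (hw s (interior_subset hs)).differentiableAt.differentiableWithinAt)
    (fun s hs ↦ by
      have hs' := interior_subset hs
      rw [(hw s hs').deriv]
      exact mul_rpow_sub_one_le_of_le_mul_rpow (hznn s hs') hε hp hC (hineq s hs'))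
    a (left_mem_Icc.2 hab) b (right_mem_Icc.2 hab) hab
  linarith

theorem le_mul_rpow_of_deriv_le_mul_rpow {z z' : ℝ → ℝ} {t C p : ℝ} (ht : 0 ≤ t) (hC : 0 ≤ C)
    (hp : 1 ≤ p) (hz0 : z 0 = 0) (hznn : ∀ s ∈ Icc 0 t, 0 ≤ z s)
    (hderiv : ∀ s ∈ Icc 0 t, HasDerivAt z (z' s) s)
    (hineq : ∀ s ∈ Icc 0 t, z' s ≤ C * p * z s ^ (1 - 1 / p)) :
    z t ≤ (C * t) ^ p := by
  have hp0 : p ≠ 0 := by positivity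
  have hzt : 0 ≤ z t := hznn t (right_mem_Icc.2 ht)
  -- the choice `ε = δ ^ p` makes the bound at `s = 0` equal to `δ`
  have hδ : ∀ δ > 0, z t ≤ (δ + C * t) ^ p := by
    intro δ hδ
    have h := add_rpow_one_div_le_of_deriv_le_mul_rpow ht hC hp (by positivity : 0 < δ ^ p)
      hznn hderiv hineq
    rw [hz0, zero_add, ← rpow_mul hδ.le, mul_one_div_cancel hp0, rpow_one, sub_zero] at h
    calc z t ≤ z t + δ ^ p := by linarith [rpow_pos_of_pos hδ p]
      _ = ((z t + δ ^ p) ^ (1 / p)) ^ p := by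
        rw [← rpow_mul (by positivity), one_div_mul_cancel hp0, rpow_one]
      _ ≤ (δ + C * t) ^ p := by gcongr
  have hcont : ContinuousWithinAt (fun δ : ℝ ↦ (δ + C * t) ^ p) (Ioi 0) 0 :=
    ((continuous_id.add continuous_const).rpow_const
      fun _ ↦ Or.inr (by linarith)).continuousWithinAt
  have hlim := hcont.tendsto
  rw [zero_add] at hlim
  exact ge_of_tendsto hlim (eventually_mem_nhdsWithin.mono hδ)

lemma nonpos_of_forall_le_rpow {x a : ℝ} (ha0 : 0 ≤ a) (ha1 : a < 1)
    (h : ∀ p : ℝ, 1 ≤ p → x ≤ a ^ p) : x ≤ 0 :=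
  ge_of_tendsto (tendsto_rpow_atTop_of_base_lt_one a (by linarith) ha1)
    ((eventually_ge_atTop 1).mono h)

theorem stmt_9_general (T C : ℝ) (hC : 0 < C)
    (z z' : ℝ → ℝ)
    (hz0 : z 0 = 0)
    (hznn : ∀ t ∈ Icc (0 : ℝ) T, 0 ≤ z t)
    (hderiv : ∀ t ∈ Icc (0 : ℝ) T, HasDerivAt z (z' t) t)
    (hineq : ∀ p : ℝ, 1 ≤ p → ∀ t ∈ Icc (0 : ℝ) T, z' t ≤ C * p * z t ^ (1 - 1 / p)) :
    ∀ t ∈ Icc (0 : ℝ) (min T (1 / (2 * C))), z t = 0 := by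
  rintro t ⟨ht0, htm⟩
  have htT : t ≤ T := htm.trans (min_le_left _ _)
  have hsub : Icc 0 t ⊆ Icc 0 T := Icc_subset_Icc_right htT
  have hCt : C * t < 1 :=
    calc C * t ≤ C * (1 / (2 * C)) := by gcongr; exact htm.trans (min_le_right _ _)
      _ < 1 := by field_simp; norm_num
  have hbound : ∀ p : ℝ, 1 ≤ p → z t ≤ (C * t) ^ p := fun p hp ↦
    le_mul_rpow_of_deriv_le_mul_rpow ht0 hC.le hp hz0 (fun s hs ↦ hznn s (hsub hs))
      (fun s hs ↦ hderiv s (hsub hs)) (fun s hs ↦ hineq p hp s (hsub hs))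
  exact le_antisymm (nonpos_of_forall_le_rpow (by positivity) hCt hbound) (hznn t ⟨ht0, htT⟩)

/-- Osgood-type uniqueness from the family of differential inequalities
    z'(t) ≤ C p z(t)^{1-1/p} for all p ≥ 1, with z(0) = 0. -/
theorem stmt_9 (T C : ℝ) (hT : 0 < T) (hC : 0 < C)
    (z z' : ℝ → ℝ)
    (hz0 : z 0 = 0)
    (hznn : ∀ t ∈ Icc (0 : ℝ) T, 0 ≤ z t)
    (hderiv : ∀ t ∈ Icc (0 : ℝ) T, HasDerivAt z (z' t) t)
    (hz'cont : ContinuousOn z' (Icc (0 : ℝ) T))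
    (hineq : ∀ p : ℝ, 1 ≤ p → ∀ t ∈ Icc (0 : ℝ) T, z' t ≤ C * p * z t ^ (1 - 1 / p)) :
    ∀ t ∈ Icc (0 : ℝ) (min T (1 / (2 * C))), z t = 0 :=
  stmt_9_general T C hC z z' hz0 hznn hderiv hineq
end

section
/- Let x : 𝕋 → ℝ² be a C^{2,δ} curve with ∂_γ x(γ) · ∂²_γ x(γ) = 0 for all γ. Then for all γ, η, |(x(γ) − x(γ−η)) · (∂_γ x(γ) − ∂_γ x(γ−η))| ≤ 2‖x‖²_{C^{2,δ}} |η|^{2+δ}. -/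
/-!
Orthogonality of `x'` and `x''` makes the speed `‖x'‖` constant. For vectors `u, v` of equal
length, polarization gives `⟪w, u - v⟫ = (‖v - w‖² - ‖u - w‖²) / 2`; with `u = x'(γ)`,
`v = x'(γ - η)`, `w = x'(t)` for `t` between them, the Lipschitz bound on `x'` makes this at most
`M² η² / 2`. The mean value theorem for `t ↦ ⟪x(t), x'(γ) - x'(γ - η)⟫` then bounds the quantity by
`M² |η|³ / 2`, which is at most `2 M² |η|^(2 + δ)` as `|η| ≤ π < 4`.
-/

open Real

section

variable {E : Type*} [NormedAddCommGroup E] [InnerProductSpace ℝ E]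

theorem norm_eq_of_hasDerivAt_of_inner_eq_zero {g g' : ℝ → E}
    (hg : ∀ t, HasDerivAt g (g' t) t) (horth : ∀ t, inner ℝ (g t) (g' t) = (0 : ℝ)) (a b : ℝ) :
    ‖g a‖ = ‖g b‖ := by
  have hsq : ‖g a‖ ^ 2 = ‖g b‖ ^ 2 :=
    is_const_of_deriv_eq_zero (fun t => (hg t).norm_sq.differentiableAt)
      (fun t => by rw [(hg t).norm_sq.deriv, horth, mul_zero]) a b
  exact (pow_left_inj₀ (norm_nonneg _) (norm_nonneg _) two_ne_zero).mp hsq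

theorem abs_inner_sub_le_of_norm_eq {u v w : E} {r : ℝ} (huv : ‖u‖ = ‖v‖)
    (hu : ‖u - w‖ ≤ r) (hv : ‖v - w‖ ≤ r) :
    |inner ℝ w (u - v)| ≤ r ^ 2 / 2 := by
  have hpolar : inner ℝ w (u - v) = (‖v - w‖ ^ 2 - ‖u - w‖ ^ 2) / 2 := by
    rw [norm_sub_sq_real, norm_sub_sq_real, inner_sub_right, real_inner_comm w u,
      real_inner_comm w v, huv]
    ring
  have hu2 : ‖u - w‖ ^ 2 ≤ r ^ 2 := pow_le_pow_left₀ (norm_nonneg _) hu 2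
  have hv2 : ‖v - w‖ ^ 2 ≤ r ^ 2 := pow_le_pow_left₀ (norm_nonneg _) hv 2
  rw [hpolar, abs_le]
  constructor <;> nlinarith [sq_nonneg ‖u - w‖, sq_nonneg ‖v - w‖]

theorem abs_inner_sub_deriv_sub_le {f f' f'' : ℝ → E} {M : ℝ}
    (hf : ∀ t, HasDerivAt f (f' t) t) (hf' : ∀ t, HasDerivAt f' (f'' t) t)
    (horth : ∀ t, inner ℝ (f' t) (f'' t) = (0 : ℝ)) (hM : ∀ t, ‖f'' t‖ ≤ M) (a b : ℝ) :
    |inner ℝ (f a - f b) (f' a - f' b)| ≤ M ^ 2 * |a - b| ^ 3 / 2 := by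
  have hM0 : 0 ≤ M := (norm_nonneg _).trans (hM 0)
  have hLip : ∀ s t, ‖f' s - f' t‖ ≤ M * |s - t| := fun s t =>
    convex_univ.norm_image_sub_le_of_norm_hasDerivWithin_le
      (fun t _ => (hf' t).hasDerivWithinAt) (fun t _ => hM t) (Set.mem_univ t) (Set.mem_univ s)
  have hpt : ∀ t ∈ Set.uIcc b a, ‖inner ℝ (f' t) (f' a - f' b)‖ ≤ M ^ 2 * |a - b| ^ 2 / 2 := by
    intro t ht
    have hta : ‖f' a - f' t‖ ≤ M * |a - b| :=
      (hLip a t).trans (mul_le_mul_of_nonneg_left (Set.abs_sub_right_of_mem_uIcc ht) hM0)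
    have htb : ‖f' b - f' t‖ ≤ M * |a - b| := by
      refine (hLip b t).trans (mul_le_mul_of_nonneg_left ?_ hM0)
      rw [abs_sub_comm b t]
      exact Set.abs_sub_left_of_mem_uIcc ht
    simpa only [Real.norm_eq_abs, mul_pow] using abs_inner_sub_le_of_norm_eq
      (norm_eq_of_hasDerivAt_of_inner_eq_zero hf' horth a b) hta htb
  have hmvt := Convex.norm_image_sub_le_of_norm_hasDerivWithin_le
    (f := fun t => inner ℝ (f t) (f' a - f' b))
    (f' := fun t => inner ℝ (f' t) (f' a - f' b))
    (fun t _ => by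
      simpa using ((hf t).inner ℝ (hasDerivAt_const t (f' a - f' b))).hasDerivWithinAt) hpt
    (convex_uIcc b a) Set.left_mem_uIcc Set.right_mem_uIcc
  rw [inner_sub_left]
  calc _ ≤ M ^ 2 * |a - b| ^ 2 / 2 * |a - b| := by simpa only [Real.norm_eq_abs] using hmvt
    _ = M ^ 2 * |a - b| ^ 3 / 2 := by ring

theorem pow_three_le_mul_rpow {s c δ : ℝ} (hs : 0 ≤ s) (hsc : s ≤ c) (hc : 1 ≤ c)
    (hδ : 0 ≤ δ) (hδ1 : δ ≤ 1) : s ^ 3 ≤ c * s ^ (2 + δ) := by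
  have hsplit : s ^ 3 = s ^ (2 + δ) * s ^ (1 - δ) := by
    rw [← Real.rpow_add' hs (by norm_num)]
    norm_num
  have hsmall : s ^ (1 - δ) ≤ c :=
    calc s ^ (1 - δ) ≤ c ^ (1 - δ) := Real.rpow_le_rpow hs hsc (by linarith)
      _ ≤ c ^ (1 : ℝ) := Real.rpow_le_rpow_of_exponent_le hc (by linarith)
      _ = c := Real.rpow_one c
  rw [hsplit, mul_comm c]
  exact mul_le_mul_of_nonneg_left hsmall (Real.rpow_nonneg hs _)

end

theorem stmt_11_general (x : ℝ → EuclideanSpace ℝ (Fin 2)) (δ : ℝ) (hδ : 0 < δ) (hδ1 : δ < 1)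
    (hx : ContDiff ℝ 2 x)
    (horth : ∀ γ : ℝ, inner ℝ (deriv x γ) (iteratedDeriv 2 x γ) = (0 : ℝ))
    (M : ℝ)
    (hM2 : ∀ γ : ℝ, ‖iteratedDeriv 2 x γ‖ ≤ M) :
    ∀ γ η : ℝ, |η| ≤ π →
      |(inner ℝ (x γ - x (γ - η)) (deriv x γ - deriv x (γ - η)) : ℝ)| ≤
        2 * M ^ 2 * |η| ^ (2 + δ) := by
  intro γ η hη
  have hderiv : ∀ t, HasDerivAt x (deriv x t) t := fun t =>
    (hx.differentiable (by norm_num) t).hasDerivAt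
  have hderiv2 : ∀ t, HasDerivAt (deriv x) (iteratedDeriv 2 x t) t := fun t => by
    rw [iteratedDeriv_succ, iteratedDeriv_one]
    simpa only [iteratedDeriv_one] using (hx.differentiable_iteratedDeriv' 1 t).hasDerivAt
  have hcubic := abs_inner_sub_deriv_sub_le hderiv hderiv2 horth hM2 γ (γ - η)
  rw [sub_sub_cancel] at hcubic
  have hpow : |η| ^ 3 ≤ 4 * |η| ^ (2 + δ) :=
    pow_three_le_mul_rpow (abs_nonneg η) (hη.trans pi_le_four) (by norm_num) hδ.le hδ1.le
  calc _ ≤ M ^ 2 * |η| ^ 3 / 2 := hcubic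
    _ ≤ M ^ 2 * (4 * |η| ^ (2 + δ)) / 2 := by gcongr
    _ = 2 * M ^ 2 * |η| ^ (2 + δ) := by ring

/-- Hölder estimate for (x(γ)−x(γ−η))·(∂x(γ)−∂x(γ−η)) when ∂x ⟂ ∂²x. -/
theorem stmt_11 (x : ℝ → EuclideanSpace ℝ (Fin 2)) (δ : ℝ) (hδ : 0 < δ) (hδ1 : δ < 1)
    (hx : ContDiff ℝ 2 x) (hper : Function.Periodic x (2 * π))
    (horth : ∀ γ : ℝ, inner ℝ (deriv x γ) (iteratedDeriv 2 x γ) = (0 : ℝ))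
    (M : ℝ)
    (hM0 : ∀ γ : ℝ, ‖x γ‖ ≤ M) (hM1 : ∀ γ : ℝ, ‖deriv x γ‖ ≤ M)
    (hM2 : ∀ γ : ℝ, ‖iteratedDeriv 2 x γ‖ ≤ M)
    (hHol : ∀ a b : ℝ, ‖iteratedDeriv 2 x a - iteratedDeriv 2 x b‖ ≤ M * |a - b| ^ δ) :
    ∀ γ η : ℝ, |η| ≤ π →
      |(inner ℝ (x γ - x (γ - η)) (deriv x γ - deriv x (γ - η)) : ℝ)| ≤
        2 * M ^ 2 * |η| ^ (2 + δ) :=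
  stmt_11_general x δ hδ hδ1 hx horth M hM2
end

section
/- Let x : 𝕋 → ℝ² be a C^{2,δ} curve satisfying the arc-chord condition F(x)(γ,η) = |η|/|x(γ)−x(γ−η)| ≤ M, with ∂_γ x · ∂²_γ x ≡ 0. Then for all γ and η ≠ 0, |(x(γ)−x(γ−η)) · (∂_γ x(γ)−∂_γ x(γ−η))| / |x(γ)−x(γ−η)|³ ≤ 2 M³ ‖x‖²_{C^{2,1/2}} |η|^{−1/2}. -/
/-!
Put `h = q - p`. Since `x'(p) ⊥ x''(p)`, the numerator splits as
`⟪x q - x p, x' q - x' p⟫ = h ⟪x' p, R₂⟫ + ⟪R₁, x' q - x' p⟫`, where `R₁`, `R₂` are the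
first-order Taylor remainders of `x` and `x'` at `p`. The bound on `x''` gives
`‖R₁‖ ≤ N h² / 2`, its Hölder bound gives `‖R₂‖ ≤ (2/3) N h^(3/2)`, so the numerator is at
most `2 N² h^(5/2)` once `h ≤ 4`; the arc-chord condition bounds the denominator below by
`(h / M)³`.
-/

open Real Set
open scoped RealInnerProductSpace

section

variable {E : Type*} [NormedAddCommGroup E] [NormedSpace ℝ E]

theorem norm_sub_sub_smul_deriv_le_of_holder {f f' : ℝ → E} {p q C α : ℝ} (hpq : p ≤ q)
    (hα : 0 ≤ α)
    (hf : ∀ t ∈ Icc p q, HasDerivWithinAt f (f' t) (Icc p q) t)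
    (hC : ∀ t ∈ Icc p q, ‖f' t - f' p‖ ≤ C * (t - p) ^ α) :
    ‖f q - f p - (q - p) • f' p‖ ≤ C / (α + 1) * (q - p) ^ (α + 1) := by
  have hB : ∀ t,
      HasDerivAt (fun t => C / (α + 1) * (t - p) ^ (α + 1)) (C * (t - p) ^ α) t := by
    intro t
    refine ((((hasDerivAt_id t).sub_const p).rpow_const (p := α + 1)
      (Or.inr (by linarith))).const_mul (C / (α + 1))).congr_deriv ?_
    rw [add_sub_cancel_right, id]
    field_simp
  have hg : ∀ t ∈ Ico p q, HasDerivWithinAt (fun t => f t - f p - (t - p) • f' p)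
      (f' t - f' p) (Ici t) t := by
    intro t ht
    have := (((hf t (Ico_subset_Icc_self ht)).sub_const (f p)).sub
      ((((hasDerivAt_id t).sub_const p).hasDerivWithinAt).smul_const (f' p)))
    simp only [id, one_smul] at this
    exact this.mono_of_mem_nhdsWithin (Icc_mem_nhdsGE_of_mem ht)
  refine image_norm_le_of_norm_deriv_right_le_deriv_boundary
    (f := fun t => f t - f p - (t - p) • f' p)
    (fun t ht => ?_) hg ?_ hB (fun t ht => hC t (Ico_subset_Icc_self ht)) ⟨hpq, le_rfl⟩
  · exact (((hf t ht).continuousWithinAt.sub continuousWithinAt_const).sub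
      ((continuousWithinAt_id.sub continuousWithinAt_const).smul continuousWithinAt_const))
  · simp [zero_rpow (by linarith : α + 1 ≠ 0)]

theorem hasDerivAt_deriv_of_contDiff_two {x : ℝ → E} (hx : ContDiff ℝ 2 x) (t : ℝ) :
    HasDerivAt (deriv x) (iteratedDeriv 2 x t) t := by
  have := ((hx.differentiable_iteratedDeriv 1 (by norm_num)) t).hasDerivAt
  rwa [← iteratedDeriv_succ, iteratedDeriv_one] at this

end

section

variable {F : Type*} [NormedAddCommGroup F] [InnerProductSpace ℝ F]

theorem abs_inner_le_of_inner_eq_zero {a b v w : F} {h : ℝ} (hh : 0 ≤ h)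
    (hvw : ⟪v, w⟫ = 0) :
    |⟪a, b⟫| ≤ h * (‖v‖ * ‖b - h • w‖) + ‖a - h • v‖ * ‖b‖ := by
  have hsplit : ⟪a, b⟫ = h * ⟪v, b - h • w⟫ + ⟪a - h • v, b⟫ := by
    simp only [inner_sub_left, inner_sub_right, real_inner_smul_left, real_inner_smul_right, hvw]
    ring
  calc |⟪a, b⟫| ≤ |h * ⟪v, b - h • w⟫| + |⟪a - h • v, b⟫| := hsplit ▸ abs_add_le _ _
    _ ≤ h * (‖v‖ * ‖b - h • w‖) + ‖a - h • v‖ * ‖b‖ := by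
      rw [abs_mul, abs_of_nonneg hh]
      gcongr <;> exact abs_real_inner_le_norm _ _

theorem abs_inner_sub_deriv_sub_le_s12 {x : ℝ → F} (hx : ContDiff ℝ 2 x) {p q N : ℝ}
    (hpq : p ≤ q)
    (horth : ⟪deriv x p, iteratedDeriv 2 x p⟫ = 0) (hN1 : ‖deriv x p‖ ≤ N)
    (hN2 : ∀ t, ‖iteratedDeriv 2 x t‖ ≤ N)
    (hHol : ∀ t, ‖iteratedDeriv 2 x t - iteratedDeriv 2 x p‖ ≤ N * |t - p| ^ (1/2 : ℝ)) :
    |⟪x q - x p, deriv x q - deriv x p⟫| ≤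
      N ^ 2 * (q - p) ^ 2 * (2/3 * (q - p) ^ (1/2 : ℝ) + (q - p) / 2) := by
  have hN : 0 ≤ N := (norm_nonneg _).trans hN1
  have hx' : ∀ t, HasDerivAt x (deriv x t) t :=
    fun t => (hx.differentiable (by norm_num) t).hasDerivAt
  have hx'' := hasDerivAt_deriv_of_contDiff_two hx
  have hlip : ∀ t ∈ Icc p q, ‖deriv x t - deriv x p‖ ≤ N * (t - p) :=
    norm_image_sub_le_of_norm_deriv_le_segment' (fun t _ => (hx'' t).hasDerivWithinAt)
      (fun t _ => hN2 t)
  have hR1 := norm_sub_sub_smul_deriv_le_of_holder (C := N) hpq zero_le_one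
    (fun t _ => (hx' t).hasDerivWithinAt) (fun t ht => by simpa using hlip t ht)
  have hR2 := norm_sub_sub_smul_deriv_le_of_holder (C := N) (α := 1/2) hpq (by norm_num)
    (fun t _ => (hx'' t).hasDerivWithinAt)
    (fun t ht => by simpa [abs_of_nonneg (sub_nonneg.2 ht.1)] using hHol t)
  have hh : 0 ≤ q - p := sub_nonneg.2 hpq
  have hpow : (q - p) ^ (1/2 + 1 : ℝ) = (q - p) ^ (1/2 : ℝ) * (q - p) := by
    rw [rpow_add' hh (by norm_num), rpow_one]
  calc |⟪x q - x p, deriv x q - deriv x p⟫|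
      ≤ (q - p) * (‖deriv x p‖ * ‖deriv x q - deriv x p - (q - p) • iteratedDeriv 2 x p‖)
        + ‖x q - x p - (q - p) • deriv x p‖ * ‖deriv x q - deriv x p‖ :=
        abs_inner_le_of_inner_eq_zero hh horth
    _ ≤ (q - p) * (N * (N / (1/2 + 1) * (q - p) ^ (1/2 + 1 : ℝ)))
        + N / (1 + 1) * (q - p) ^ (1 + 1 : ℝ) * (N * (q - p)) := by
        gcongr
        exact hlip q ⟨hpq, le_rfl⟩
    _ = N ^ 2 * (q - p) ^ 2 * (2/3 * (q - p) ^ (1/2 : ℝ) + (q - p) / 2) := by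
        rw [hpow]; norm_num; ring

theorem abs_inner_sub_deriv_sub_le_of_abs_le_four {x : ℝ → F} (hx : ContDiff ℝ 2 x) {N : ℝ}
    (horth : ∀ t, ⟪deriv x t, iteratedDeriv 2 x t⟫ = 0) (hN1 : ∀ t, ‖deriv x t‖ ≤ N)
    (hN2 : ∀ t, ‖iteratedDeriv 2 x t‖ ≤ N)
    (hHol : ∀ a b, ‖iteratedDeriv 2 x a - iteratedDeriv 2 x b‖ ≤ N * |a - b| ^ (1/2 : ℝ))
    {p q : ℝ} (h4 : |q - p| ≤ 4) :
    |⟪x q - x p, deriv x q - deriv x p⟫| ≤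
      2 * N ^ 2 * |q - p| ^ 2 * |q - p| ^ (1/2 : ℝ) := by
  wlog hpq : p ≤ q generalizing p q
  · have := this (abs_sub_comm p q ▸ h4) (le_of_not_ge hpq)
    rwa [← neg_sub (x q), ← neg_sub (deriv x q), inner_neg_neg, abs_sub_comm p q] at this
  set h := q - p
  set s := h ^ (1/2 : ℝ)
  have hh : 0 ≤ h := sub_nonneg.2 hpq
  have hs : 0 ≤ s := rpow_nonneg hh _
  have hss : s * s = h := by rw [← rpow_add' hh (by norm_num)]; norm_num
  have hs2 : s ≤ 2 := by nlinarith [abs_of_nonneg hh]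
  calc |⟪x q - x p, deriv x q - deriv x p⟫| ≤ N ^ 2 * h ^ 2 * (2/3 * s + h / 2) :=
        abs_inner_sub_deriv_sub_le_s12 hx hpq (horth p) (hN1 p) hN2 (fun t => hHol t p)
    _ ≤ N ^ 2 * h ^ 2 * (2 * s) := by gcongr; nlinarith
    _ = 2 * N ^ 2 * |h| ^ 2 * |h| ^ (1/2 : ℝ) := by rw [abs_of_nonneg hh]; ring

end

theorem stmt_12_general (x : ℝ → EuclideanSpace ℝ (Fin 2))
    (hx : ContDiff ℝ 2 x)
    (horth : ∀ γ : ℝ, inner ℝ (deriv x γ) (iteratedDeriv 2 x γ) = (0 : ℝ))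
    (M : ℝ) (hM : 0 < M)
    (harcchord : ∀ γ η : ℝ, |η| ≤ π → |η| ≤ M * ‖x γ - x (γ - η)‖)
    (N : ℝ)
    (hN1 : ∀ γ : ℝ, ‖deriv x γ‖ ≤ N)
    (hN2 : ∀ γ : ℝ, ‖iteratedDeriv 2 x γ‖ ≤ N)
    (hHol : ∀ a b : ℝ, ‖iteratedDeriv 2 x a - iteratedDeriv 2 x b‖ ≤ N * |a - b| ^ (1/2 : ℝ)) :
    ∀ γ η : ℝ, η ≠ 0 → |η| ≤ π →
      |(inner ℝ (x γ - x (γ - η)) (deriv x γ - deriv x (γ - η)) : ℝ)| /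
          ‖x γ - x (γ - η)‖ ^ 3 ≤
        2 * M ^ 3 * N ^ 2 * |η| ^ (-(1/2) : ℝ) := by
  intro γ η hη hηπ
  have ht : 0 < |η| := abs_pos.2 hη
  have hnum := abs_inner_sub_deriv_sub_le_of_abs_le_four hx horth hN1 hN2 hHol
    (p := γ - η) (q := γ) (by rw [sub_sub_cancel]; linarith [pi_le_four])
  rw [sub_sub_cancel] at hnum
  have hden : |η| / M ≤ ‖x γ - x (γ - η)‖ := by
    rw [div_le_iff₀ hM, mul_comm]; exact harcchord γ η hηπ
  have hss : |η| ^ (1/2 : ℝ) * |η| ^ (1/2 : ℝ) = |η| := by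
    rw [← rpow_add ht]; norm_num
  calc _ ≤ 2 * N ^ 2 * |η| ^ 2 * |η| ^ (1/2 : ℝ) / (|η| / M) ^ 3 := by gcongr
    _ = 2 * M ^ 3 * N ^ 2 * |η| ^ (-(1/2) : ℝ) := by
      rw [rpow_neg ht.le]
      generalize |η| ^ (1/2 : ℝ) = s at hss ⊢
      rw [← hss]
      field_simp

/-- arc-chord weighted estimate for the kernel
    (x_- · ∂x_-)/|x_-|³ for a constant-speed C^{2,1/2} curve. -/
theorem stmt_12 (x : ℝ → EuclideanSpace ℝ (Fin 2))
    (hx : ContDiff ℝ 2 x) (hper : Function.Periodic x (2 * π))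
    (horth : ∀ γ : ℝ, inner ℝ (deriv x γ) (iteratedDeriv 2 x γ) = (0 : ℝ))
    (M : ℝ) (hM : 0 < M)
    (harcchord : ∀ γ η : ℝ, |η| ≤ π → |η| ≤ M * ‖x γ - x (γ - η)‖)
    (N : ℝ)
    (hN0 : ∀ γ : ℝ, ‖x γ‖ ≤ N) (hN1 : ∀ γ : ℝ, ‖deriv x γ‖ ≤ N)
    (hN2 : ∀ γ : ℝ, ‖iteratedDeriv 2 x γ‖ ≤ N)
    (hHol : ∀ a b : ℝ, ‖iteratedDeriv 2 x a - iteratedDeriv 2 x b‖ ≤ N * |a - b| ^ (1/2 : ℝ)) :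
    ∀ γ η : ℝ, η ≠ 0 → |η| ≤ π →
      |(inner ℝ (x γ - x (γ - η)) (deriv x γ - deriv x (γ - η)) : ℝ)| /
          ‖x γ - x (γ - η)‖ ^ 3 ≤
        2 * M ^ 3 * N ^ 2 * |η| ^ (-(1/2) : ℝ) :=
  stmt_12_general x hx horth M hM harcchord N hN1 hN2 hHol
end

section
/- Let x : 𝕋 → ℝ² be C³ with |∂_γ x| constant in γ (so ∂_γ x · ∂²_γ x ≡ 0 and ∂_γ x · ∂³_γ x = −|∂²_γ x|²). Then |(∂_γ x(γ) − ∂_γ x(γ−η) − ∂²_γ x(γ) η + (1/2)∂³_γ x(γ) η²) · ∂_γ x(γ)| ≤ 2 |η|³ ‖x‖_{C²} ∫₀¹ |∂³_γ x(γ + (r−1)η)| dr. -/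
/-!
Put `v = x'`, `w = x''`, `u = x'''` and `b = γ - η`. Constant speed gives `⟪w, v⟫ = 0` and
`⟪u, v⟫ = -‖w‖²`. By Taylor's formula the expression is `-∫_γ^b (b - t) ⟪u t, v γ⟫ dt` up to
`(η²/2) ⟪u γ, v γ⟫ = -(η²/2) ‖w γ‖²`. Splitting `⟪u t, v γ⟫ = -‖w t‖² + ⟪u t, v γ - v t⟫` and
integrating `(b - t) ‖w t‖²` by parts cancels that boundary term and leaves
`∫_γ^b ((b - t)² ⟪u t, w t⟫ + (b - t) ⟪u t, v t - v γ⟫) dt`. Both parts of the integrand are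
at most `η² M ‖u t‖`, since `‖w‖ ≤ M` and `v` is `M`-Lipschitz; rescaling `[b, γ]` to `[0, 1]`
produces the factor `|η|³`.
-/

open Real MeasureTheory intervalIntegral Set
open scoped RealInnerProductSpace

theorem abs_integral_sub_eq_abs_mul_integral_unitInterval {f : ℝ → ℝ} (hf : ∀ t, 0 ≤ f t)
    (a h : ℝ) : |∫ t in a..a - h, f t| = |h| * ∫ r in 0..1, f (a + (r - 1) * h) := by
  have hsubst := smul_integral_comp_mul_add (a := 0) (b := 1) f h (a - h)
  simp only [mul_zero, zero_add, mul_one, add_sub_cancel, smul_eq_mul] at hsubst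
  rw [integral_symm, abs_neg, ← hsubst, abs_mul,
    abs_of_nonneg (integral_nonneg zero_le_one fun r _ => hf _)]
  congr 2 with r
  ring_nf

section ConstantSpeed

variable {E : Type*} [NormedAddCommGroup E] [InnerProductSpace ℝ E] {v w u : ℝ → E}

theorem inner_deriv_self_eq_zero_of_norm_eq_const {c : ℝ}
    (hv : ∀ t, HasDerivAt v (w t) t) (hc : ∀ t, ‖v t‖ = c) (t : ℝ) : ⟪w t, v t⟫ = 0 := by
  have h0 : HasDerivAt (fun s => ⟪v s, v s⟫) 0 t := by
    simp only [real_inner_self_eq_norm_sq, hc]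
    exact hasDerivAt_const _ _
  have h := ((hv t).inner ℝ (hv t)).unique h0
  rw [real_inner_comm (w t)] at h
  linarith

theorem inner_deriv_deriv_eq_neg_norm_sq
    (hv : ∀ t, HasDerivAt v (w t) t) (hw : ∀ t, HasDerivAt w (u t) t)
    (horth : ∀ t, ⟪w t, v t⟫ = 0) (t : ℝ) : ⟪u t, v t⟫ = -‖w t‖ ^ 2 := by
  have h0 : HasDerivAt (fun s => ⟪w s, v s⟫) 0 t := by
    simp only [horth]
    exact hasDerivAt_const _ _
  have h := ((hw t).inner ℝ (hv t)).unique h0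
  rw [real_inner_self_eq_norm_sq] at h
  linarith

theorem inner_taylor_remainder_eq_integral
    (hv : ∀ t, HasDerivAt v (w t) t) (hw : ∀ t, HasDerivAt w (u t) t) (hu : Continuous u)
    (horth : ∀ t, ⟪w t, v t⟫ = 0) (a b : ℝ) :
    ⟪v a - v b - (a - b) • w a + ((a - b) ^ 2 / 2) • u a, v a⟫ =
      ∫ t in a..b, ((b - t) ^ 2 * ⟪u t, w t⟫ + (b - t) * ⟪u t, v t - v a⟫) := by
  have hv_cont : Continuous v := continuous_iff_continuousAt.2 fun t => (hv t).continuousAt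
  have hw_cont : Continuous w := continuous_iff_continuousAt.2 fun t => (hw t).continuousAt
  -- The first two terms of this primitive come from integrating `(b - s) ‖w s‖²` by parts.
  have hprim : ∀ t, HasDerivAt
      (fun s => (b - s) ^ 2 / 2 * ‖w s‖ ^ 2 + (b - s) * ⟪w s, v s - v a⟫ - ⟪v s, v a⟫)
      ((b - t) ^ 2 * ⟪u t, w t⟫ + (b - t) * ⟪u t, v t - v a⟫) t := by
    intro t
    have hbs : HasDerivAt (fun s : ℝ => b - s) (-1) t := (hasDerivAt_id t).const_sub b
    have H := ((((hbs.pow 2).div_const 2).mul ((hw t).norm_sq)).add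
      (hbs.mul ((hw t).inner ℝ ((hv t).sub_const (v a))))).sub
      ((hv t).inner ℝ (hasDerivAt_const t (v a)))
    refine H.congr_deriv ?_
    simp only [Pi.pow_apply, inner_sub_right, horth t, real_inner_comm (w t) (u t),
      real_inner_self_eq_norm_sq, inner_zero_right]
    ring
  rw [integral_eq_sub_of_hasDerivAt (fun t _ => hprim t)
    ((by fun_prop : Continuous _).intervalIntegrable _ _)]
  simp only [inner_sub_left, inner_add_left, real_inner_smul_left, horth a,
    inner_deriv_deriv_eq_neg_norm_sq hv hw horth a, sub_self, inner_zero_right,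
    real_inner_self_eq_norm_sq]
  ring

theorem abs_taylor_integrand_le {M : ℝ} (hv : ∀ t, HasDerivAt v (w t) t) (hM : ∀ t, ‖w t‖ ≤ M)
    {a b t : ℝ} (ht : t ∈ uIcc a b) :
    |(b - t) ^ 2 * ⟪u t, w t⟫ + (b - t) * ⟪u t, v t - v a⟫| ≤ 2 * M * (a - b) ^ 2 * ‖u t‖ := by
  have hM0 : 0 ≤ M := (norm_nonneg _).trans (hM 0)
  have hbt : |b - t| ≤ |a - b| := by
    simpa only [abs_sub_comm b a] using abs_sub_right_of_mem_uIcc ht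
  have hta : |t - a| ≤ |a - b| := by
    simpa only [abs_sub_comm b a] using abs_sub_left_of_mem_uIcc ht
  have hlip : ‖v t - v a‖ ≤ M * |t - a| :=
    convex_univ.norm_image_sub_le_of_norm_hasDerivWithin_le (fun r _ => (hv r).hasDerivWithinAt)
      (fun r _ => hM r) (mem_univ a) (mem_univ t)
  have huw : |⟪u t, w t⟫| ≤ ‖u t‖ * M :=
    (abs_real_inner_le_norm _ _).trans (mul_le_mul_of_nonneg_left (hM t) (norm_nonneg _))
  have huv : |⟪u t, v t - v a⟫| ≤ ‖u t‖ * (M * |a - b|) :=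
    (abs_real_inner_le_norm _ _).trans <| mul_le_mul_of_nonneg_left
      (hlip.trans (mul_le_mul_of_nonneg_left hta hM0)) (norm_nonneg _)
  calc _ ≤ |b - t| ^ 2 * |⟪u t, w t⟫| + |b - t| * |⟪u t, v t - v a⟫| := by
        rw [← abs_pow, ← abs_mul, ← abs_mul]
        exact abs_add_le _ _
    _ ≤ |a - b| ^ 2 * (‖u t‖ * M) + |a - b| * (‖u t‖ * (M * |a - b|)) := by gcongr
    _ = 2 * M * (a - b) ^ 2 * ‖u t‖ := by rw [← sq_abs (a - b)]; ring

theorem abs_inner_taylor_remainder_le_of_norm_eq_const {c M : ℝ}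
    (hv : ∀ t, HasDerivAt v (w t) t) (hw : ∀ t, HasDerivAt w (u t) t) (hu : Continuous u)
    (hc : ∀ t, ‖v t‖ = c) (hM : ∀ t, ‖w t‖ ≤ M) (a h : ℝ) :
    |⟪v a - v (a - h) - h • w a + (h ^ 2 / 2) • u a, v a⟫| ≤
      2 * |h| ^ 3 * M * ∫ r in 0..1, ‖u (a + (r - 1) * h)‖ := by
  have hM0 : 0 ≤ M := (norm_nonneg _).trans (hM 0)
  have hkey := inner_taylor_remainder_eq_integral hv hw hu
    (inner_deriv_self_eq_zero_of_norm_eq_const hv hc) a (a - h)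
  rw [sub_sub_cancel] at hkey
  rw [hkey, ← Real.norm_eq_abs]
  calc _ ≤ |∫ t in a..a - h, 2 * M * h ^ 2 * ‖u t‖| := by
        refine norm_integral_le_abs_of_norm_le
          (ae_restrict_of_forall_mem measurableSet_uIoc fun t ht => ?_)
          ((by fun_prop : Continuous _).intervalIntegrable _ _)
        simpa only [sub_sub_cancel, Real.norm_eq_abs] using
          abs_taylor_integrand_le hv hM (uIoc_subset_uIcc ht)
    _ = 2 * M * h ^ 2 * (|h| * ∫ r in 0..1, ‖u (a + (r - 1) * h)‖) := by
        rw [intervalIntegral.integral_const_mul, abs_mul, abs_of_nonneg (by positivity),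
          abs_integral_sub_eq_abs_mul_integral_unitInterval (fun t => norm_nonneg _)]
    _ = _ := by rw [← sq_abs h]; ring

end ConstantSpeed

theorem stmt_15_general (x : ℝ → EuclideanSpace ℝ (Fin 2))
    (hx : ContDiff ℝ 3 x)
    (c : ℝ) (hspeed : ∀ γ : ℝ, ‖deriv x γ‖ = c)
    (M : ℝ)
    (hM2 : ∀ γ : ℝ, ‖iteratedDeriv 2 x γ‖ ≤ M) :
    ∀ γ η : ℝ,
      |(inner ℝ (deriv x γ - deriv x (γ - η) - η • iteratedDeriv 2 x γ
            + (η ^ 2 / 2) • iteratedDeriv 3 x γ) (deriv x γ) : ℝ)| ≤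
        2 * |η| ^ 3 * M * ∫ r in (0 : ℝ)..1, ‖iteratedDeriv 3 x (γ + (r - 1) * η)‖ := by
  have hderiv (k : ℕ) (hk : k < 3) (t : ℝ) :
      HasDerivAt (iteratedDeriv k x) (iteratedDeriv (k + 1) x t) t := by
    rw [iteratedDeriv_succ]
    exact (hx.differentiable_iteratedDeriv k (by exact_mod_cast hk) t).hasDerivAt
  rw [← iteratedDeriv_one] at hspeed ⊢
  exact abs_inner_taylor_remainder_le_of_norm_eq_const (hderiv 1 (by norm_num))
    (hderiv 2 (by norm_num)) (hx.continuous_iteratedDeriv 3 le_rfl) hspeed hM2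

/-- bound on the tangential component of the Taylor remainder of ∂_γ x
    for a constant-speed periodic curve. -/
theorem stmt_15 (x : ℝ → EuclideanSpace ℝ (Fin 2))
    (hx : ContDiff ℝ 3 x) (hper : Function.Periodic x (2 * π))
    (c : ℝ) (hspeed : ∀ γ : ℝ, ‖deriv x γ‖ = c)
    (M : ℝ) (hM0 : ∀ γ : ℝ, ‖x γ‖ ≤ M) (hM1 : ∀ γ : ℝ, ‖deriv x γ‖ ≤ M)
    (hM2 : ∀ γ : ℝ, ‖iteratedDeriv 2 x γ‖ ≤ M) :
    ∀ γ η : ℝ,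
      |(inner ℝ (deriv x γ - deriv x (γ - η) - η • iteratedDeriv 2 x γ
            + (η ^ 2 / 2) • iteratedDeriv 3 x γ) (deriv x γ) : ℝ)| ≤
        2 * |η| ^ 3 * M * ∫ r in (0 : ℝ)..1, ‖iteratedDeriv 3 x (γ + (r - 1) * η)‖ :=
  stmt_15_general x hx c hspeed M hM2
end

section
/- Let x : 𝕋 → ℝ² be a C² curve with F(x)(γ,η) = |η|/|x(γ)−x(γ−η)| ≤ M and ∂_γ x · ∂²_γ x ≡ 0, and define A(γ) = ∫_{-π}^{π} (1/|x(γ)−x(γ−η)| − 1/(|∂_γ x(γ)||η|)) dη (where |∂_γx| is constant in γ). Then ∂_γ A(γ) = −∫_{-π}^{π} ((x(γ)−x(γ−η))·(∂_γ x(γ)−∂_γ x(γ−η)) − ∂_γ x(γ)·∂²_γ x(γ) η²)/|x(γ)−x(γ−η)|³ dη and ‖∂_γ A‖_{L^∞} ≤ 4π M³ ‖x‖²_{C^{2,1/2}}. -/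
/-!
Write `u = x γ - x (γ - η)` and `v = ∂x γ - ∂x (γ - η)`. Taylor expansion at `γ` gives
`u = η ∂x γ + O(η²)` and, by the Hölder bound on `∂²x`, `v = η ∂²x γ + O(|η|^{3/2})`. Since
`∂x γ ⊥ ∂²x γ`, the leading term `η² ⟪∂x γ, ∂²x γ⟫` of `⟪u, v⟫` vanishes, so
`|⟪u, v⟫| ≤ N² η² (|η|/2 + |η|^{1/2})`, while the arc-chord condition gives `‖u‖ ≥ |η| / M`.
Hence the `γ`-derivative `-⟪u, v⟫ / ‖u‖³` of the integrand of `A` is dominated, uniformly in `γ`,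
by `M³ N² (1/2 + |η|^{-1/2})`, which justifies differentiating under the integral sign, and the
integral of this dominating function over `[-π, π]` is `M³ N² (π + 4 √π) ≤ 4 π M³ N²`.
-/

open Real MeasureTheory Set
open scoped Interval RealInnerProductSpace

section Taylor

variable {E : Type*} [NormedAddCommGroup E] [NormedSpace ℝ E] {f f' f'' : ℝ → E}

theorem norm_sub_le_of_norm_deriv_le (hf : ∀ t, HasDerivAt f (f' t) t) {C : ℝ}
    (hC : ∀ t, ‖f' t‖ ≤ C) (a b : ℝ) : ‖f a - f b‖ ≤ C * |a - b| := by
  simpa using convex_univ.norm_image_sub_le_of_norm_hasDerivWithin_le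
    (fun t _ => (hf t).hasDerivWithinAt) (fun t _ => hC t) (mem_univ b) (mem_univ a)

theorem sub_sub_smul_eq_integral [CompleteSpace E] (hf : ∀ t, HasDerivAt f (f' t) t)
    (hf' : Continuous f') (γ η : ℝ) :
    f γ - f (γ - η) - η • f' γ = ∫ t in (γ - η)..γ, (f' t - f' γ) := by
  rw [intervalIntegral.integral_sub (hf'.intervalIntegrable _ _) intervalIntegrable_const,
    intervalIntegral.integral_eq_sub_of_hasDerivAt (fun t _ => hf t)
      (hf'.intervalIntegrable _ _),
    intervalIntegral.integral_const, sub_sub_cancel]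

theorem norm_sub_sub_smul_le_of_norm_deriv_le [CompleteSpace E]
    (hf : ∀ t, HasDerivAt f (f' t) t) (hf' : ∀ t, HasDerivAt f' (f'' t) t) {C : ℝ}
    (hC : ∀ t, ‖f'' t‖ ≤ C) (γ η : ℝ) :
    ‖f γ - f (γ - η) - η • f' γ‖ ≤ C * η ^ 2 / 2 := by
  have hf'c : Continuous f' := continuous_iff_continuousAt.mpr fun t => (hf' t).continuousAt
  have hdist : ∀ t, ‖f' t - f' γ‖ ≤ C * |t - γ| ^ 1 := fun t => by
    simpa using norm_sub_le_of_norm_deriv_le hf' hC t γ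
  rw [sub_sub_smul_eq_integral hf hf'c, intervalIntegral.norm_integral_eq_norm_integral_uIoc,
    uIoc_comm]
  calc _ ≤ ∫ t in Ι γ (γ - η), C * |t - γ| ^ 1 :=
        norm_integral_le_of_norm_le (Continuous.integrableOn_uIoc (by fun_prop))
          (Filter.Eventually.of_forall hdist)
    _ = C * η ^ 2 / 2 := by
        rw [integral_const_mul, integral_pow_abs_sub_uIoc]
        norm_num [sq_abs, mul_div_assoc]

theorem norm_sub_sub_smul_le_of_holder (hf : ∀ t, HasDerivAt f (f' t) t) {C α : ℝ}
    (hC : 0 ≤ C) (hα : 0 ≤ α) (hhol : ∀ a b, ‖f' a - f' b‖ ≤ C * |a - b| ^ α) (γ η : ℝ) :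
    ‖f γ - f (γ - η) - η • f' γ‖ ≤ C * |η| ^ α * |η| := by
  have hderiv : ∀ t ∈ [[γ - η, γ]],
      HasDerivWithinAt (fun t => f t - t • f' γ) (f' t - f' γ) [[γ - η, γ]] t := fun t _ =>
    ((hf t).sub (by simpa using (hasDerivAt_id t).smul_const (f' γ))).hasDerivWithinAt
  have hbound : ∀ t ∈ [[γ - η, γ]], ‖f' t - f' γ‖ ≤ C * |η| ^ α := fun t ht => by
    refine (hhol t γ).trans (mul_le_mul_of_nonneg_left (rpow_le_rpow (abs_nonneg _) ?_ hα) hC)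
    have := abs_sub_left_of_mem_uIcc (uIcc_comm (γ - η) γ ▸ ht)
    rwa [sub_sub_cancel_left, abs_neg] at this
  have := (convex_uIcc _ _).norm_image_sub_le_of_norm_hasDerivWithin_le hderiv hbound
    left_mem_uIcc right_mem_uIcc
  convert this using 2 <;> simp [sub_smul]; abel

end Taylor

section InnerProduct

variable {E : Type*} [NormedAddCommGroup E] [InnerProductSpace ℝ E]

theorem abs_inner_le_of_inner_eq_zero_s19 {u v p q : E} {η a b d N : ℝ} (hpq : ⟪p, q⟫ = 0)
    (hu : ‖u - η • p‖ ≤ a) (hv : ‖v‖ ≤ b) (hp : ‖p‖ ≤ N) (hvq : ‖v - η • q‖ ≤ d) :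
    |⟪u, v⟫| ≤ a * b + |η| * N * d := by
  have hsplit : ⟪u, v⟫ = ⟪u - η • p, v⟫ + ⟪η • p, v - η • q⟫ := by
    simp only [inner_sub_left, inner_sub_right, real_inner_smul_left, real_inner_smul_right,
      hpq]
    ring
  have hηp : ‖η • p‖ ≤ |η| * N := by
    rw [norm_smul, norm_eq_abs]; exact mul_le_mul_of_nonneg_left hp (abs_nonneg η)
  rw [hsplit]
  calc _ ≤ ‖u - η • p‖ * ‖v‖ + ‖η • p‖ * ‖v - η • q‖ := (abs_add_le _ _).trans
        (add_le_add (abs_real_inner_le_norm _ _) (abs_real_inner_le_norm _ _))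
    _ ≤ a * b + |η| * N * d := by
        gcongr <;> linarith [norm_nonneg (u - η • p), norm_nonneg (η • p)]

theorem HasDerivAt.inv_norm {u : ℝ → E} {u' : E} {γ : ℝ} (hu : HasDerivAt u u' γ)
    (h0 : u γ ≠ 0) : HasDerivAt (fun t => ‖u t‖⁻¹) (-(⟪u γ, u'⟫ / ‖u γ‖ ^ 3)) γ := by
  have hpos : 0 < ‖u γ‖ := norm_pos_iff.mpr h0
  have hsqrt := (hu.norm_sq.sqrt (by positivity)).inv (by simpa using hpos.ne')
  simp only [sqrt_sq (norm_nonneg _)] at hsqrt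
  exact hsqrt.congr_deriv (by field_simp)

end InnerProduct

theorem intervalIntegrable_abs_rpow {r : ℝ} (hr : -1 < r) (a b : ℝ) :
    IntervalIntegrable (fun η : ℝ => |η| ^ r) volume a b := by
  have hpos : ∀ c, 0 ≤ c → IntervalIntegrable (fun η : ℝ => |η| ^ r) volume 0 c := fun c hc =>
    (intervalIntegral.intervalIntegrable_rpow' hr).congr fun t ht => by
      rw [uIoc_of_le hc] at ht; simp [abs_of_pos ht.1]
  have hzero : ∀ c, IntervalIntegrable (fun η : ℝ => |η| ^ r) volume 0 c := fun c => by
    rcases le_total 0 c with hc | hc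
    · exact hpos c hc
    · simpa using (IntervalIntegrable.iff_comp_neg).mp (hpos (-c) (neg_nonneg.mpr hc))
  exact (hzero a).symm.trans (hzero b)

theorem integral_abs_rpow {r : ℝ} (hr : -1 < r) {a : ℝ} (ha : 0 ≤ a) :
    ∫ η in (-a)..a, |η| ^ r = 2 * a ^ (r + 1) / (r + 1) := by
  have hpos : ∫ η in (0:ℝ)..a, |η| ^ r = a ^ (r + 1) / (r + 1) := by
    rw [intervalIntegral.integral_congr (g := fun η => η ^ r) fun t ht => by
      rw [uIcc_of_le ha] at ht; simp [abs_of_nonneg ht.1], integral_rpow (.inl hr),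
      zero_rpow (by linarith), sub_zero]
  have hneg : ∫ η in (-a)..0, |η| ^ r = ∫ η in (0:ℝ)..a, |η| ^ r := by
    simpa using (intervalIntegral.integral_comp_neg (a := 0) (b := a) fun η => |η| ^ r).symm
  rw [← intervalIntegral.integral_add_adjacent_intervals (intervalIntegrable_abs_rpow hr _ _)
    (intervalIntegrable_abs_rpow hr _ _), hneg, hpos]
  ring

theorem integral_half_add_abs_rpow_neg_half_le :
    ∫ η in (-π)..π, (1 / 2 + |η| ^ (-(1 / 2) : ℝ)) ≤ 4 * π := by
  rw [intervalIntegral.integral_add intervalIntegrable_const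
    (intervalIntegrable_abs_rpow (by norm_num) _ _), integral_abs_rpow (by norm_num) pi_pos.le,
    intervalIntegral.integral_const, smul_eq_mul]
  have hsqrt : π ^ (-(1 / 2) + 1 : ℝ) = √π := by
    rw [sqrt_eq_rpow]; norm_num
  rw [hsqrt]
  norm_num
  nlinarith [sq_sqrt pi_pos.le, sq_nonneg (3 * √π - 4), pi_gt_three]

theorem abs_integral_le_of_abs_le_half_add_abs_rpow_neg_half {f : ℝ → ℝ} {K : ℝ} (hK : 0 ≤ K)
    (hf : ∀ η ∈ Ι (-π) π, η ≠ 0 → |f η| ≤ K * (1 / 2 + |η| ^ (-(1 / 2) : ℝ))) :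
    |∫ η in (-π)..π, f η| ≤ 4 * π * K := by
  rw [← Real.norm_eq_abs]
  calc _ ≤ ∫ η in (-π)..π, K * (1 / 2 + |η| ^ (-(1 / 2) : ℝ)) :=
        intervalIntegral.norm_integral_le_of_norm_le (by linarith [pi_pos])
          ((Measure.ae_ne volume 0).mono fun η h0 hη => hf η (Ioc_subset_uIoc hη) h0)
          ((intervalIntegrable_const.add
            (intervalIntegrable_abs_rpow (by norm_num) _ _)).const_mul _)
    _ ≤ 4 * π * K := by
        rw [intervalIntegral.integral_const_mul]
        exact (mul_le_mul_of_nonneg_left integral_half_add_abs_rpow_neg_half_le hK).trans_eq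
          (by ring)

section Chord

variable {E : Type*} [NormedAddCommGroup E] [InnerProductSpace ℝ E]
  {x x' x'' : ℝ → E} {M N γ η : ℝ}

theorem abs_inner_chord_le [CompleteSpace E] (hx : ∀ t, HasDerivAt x (x' t) t)
    (hx' : ∀ t, HasDerivAt x' (x'' t) t) (hN1 : ‖x' γ‖ ≤ N) (hN2 : ∀ t, ‖x'' t‖ ≤ N)
    (hHol : ∀ a b, ‖x'' a - x'' b‖ ≤ N * |a - b| ^ (1 / 2 : ℝ)) (horth : ⟪x' γ, x'' γ⟫ = 0) :
    |⟪x γ - x (γ - η), x' γ - x' (γ - η)⟫| ≤ N ^ 2 * η ^ 2 * (|η| / 2 + |η| ^ (1 / 2 : ℝ)) := by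
  have hN : 0 ≤ N := (norm_nonneg _).trans (hN2 0)
  have hv : ‖x' γ - x' (γ - η)‖ ≤ N * |η| := by
    simpa using norm_sub_le_of_norm_deriv_le hx' hN2 γ (γ - η)
  calc _ ≤ N * η ^ 2 / 2 * (N * |η|) + |η| * N * (N * |η| ^ (1 / 2 : ℝ) * |η|) :=
        abs_inner_le_of_inner_eq_zero_s19 horth
          (norm_sub_sub_smul_le_of_norm_deriv_le hx hx' hN2 γ η) hv hN1
          (norm_sub_sub_smul_le_of_holder hx' hN (by norm_num) hHol γ η)
    _ = N ^ 2 * η ^ 2 * (|η| / 2 + |η| ^ (1 / 2 : ℝ)) := by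
        rw [← sq_abs η]; ring

theorem abs_inner_chord_div_norm_chord_pow_three_le [CompleteSpace E]
    (hx : ∀ t, HasDerivAt x (x' t) t)
    (hx' : ∀ t, HasDerivAt x' (x'' t) t) (hN1 : ‖x' γ‖ ≤ N) (hN2 : ∀ t, ‖x'' t‖ ≤ N)
    (hHol : ∀ a b, ‖x'' a - x'' b‖ ≤ N * |a - b| ^ (1 / 2 : ℝ)) (horth : ⟪x' γ, x'' γ⟫ = 0)
    (hM : 0 < M) (hη : η ≠ 0) (hchord : |η| ≤ M * ‖x γ - x (γ - η)‖) :
    |⟪x γ - x (γ - η), x' γ - x' (γ - η)⟫ / ‖x γ - x (γ - η)‖ ^ 3|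
      ≤ M ^ 3 * N ^ 2 * (1 / 2 + |η| ^ (-(1 / 2) : ℝ)) := by
  have hηpos : 0 < |η| := abs_pos.mpr hη
  have hcube : (|η| / M) ^ 3 ≤ ‖x γ - x (γ - η)‖ ^ 3 := by
    gcongr; rwa [div_le_iff₀' hM]
  have hrpow : |η| ^ (-(1 / 2) : ℝ) = |η| ^ (1 / 2 : ℝ) / |η| := by
    rw [show (-(1 / 2) : ℝ) = 1 / 2 - 1 by norm_num, rpow_sub hηpos, rpow_one]
  rw [abs_div, abs_of_nonneg (by positivity : (0 : ℝ) ≤ ‖x γ - x (γ - η)‖ ^ 3), hrpow]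
  calc _ ≤ N ^ 2 * η ^ 2 * (|η| / 2 + |η| ^ (1 / 2 : ℝ)) / (|η| / M) ^ 3 :=
        div_le_div₀ (by positivity) (abs_inner_chord_le hx hx' hN1 hN2 hHol horth)
          (by positivity) hcube
    _ = M ^ 3 * N ^ 2 * (1 / 2 + |η| ^ (1 / 2 : ℝ) / |η|) := by
        rw [← sq_abs η]; field_simp

theorem abs_inv_norm_chord_sub_le [CompleteSpace E] (hx : ∀ t, HasDerivAt x (x' t) t)
    (hx' : ∀ t, HasDerivAt x' (x'' t) t) (hN2 : ∀ t, ‖x'' t‖ ≤ N) {c : ℝ} (hc : 0 < c)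
    (hspeed : ‖x' γ‖ = c) (hM : 0 < M) (hη : η ≠ 0) (hchord : |η| ≤ M * ‖x γ - x (γ - η)‖) :
    |1 / ‖x γ - x (γ - η)‖ - 1 / (c * |η|)| ≤ M * N / (2 * c) := by
  have hN : 0 ≤ N := (norm_nonneg _).trans (hN2 0)
  have hηpos : 0 < |η| := abs_pos.mpr hη
  have hchord' : |η| / M ≤ ‖x γ - x (γ - η)‖ := by rwa [div_le_iff₀' hM]
  have hd : 0 < ‖x γ - x (γ - η)‖ := (div_pos hηpos hM).trans_le hchord'
  have hnum : |c * |η| - ‖x γ - x (γ - η)‖| ≤ N * η ^ 2 / 2 := calc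
    _ = |‖η • x' γ‖ - ‖x γ - x (γ - η)‖| := by rw [norm_smul, norm_eq_abs, hspeed, mul_comm]
    _ ≤ ‖x γ - x (γ - η) - η • x' γ‖ := by
        rw [norm_sub_rev (x γ - _)]; exact abs_norm_sub_norm_le _ _
    _ ≤ N * η ^ 2 / 2 := norm_sub_sub_smul_le_of_norm_deriv_le hx hx' hN2 γ η
  have hden : c * η ^ 2 / M ≤ ‖x γ - x (γ - η)‖ * (c * |η|) := by
    rw [← sq_abs, show c * |η| ^ 2 / M = |η| / M * (c * |η|) by ring]
    gcongr
  rw [div_sub_div _ _ hd.ne' (by positivity), one_mul, mul_one, abs_div,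
    abs_of_pos (by positivity : 0 < ‖x γ - x (γ - η)‖ * (c * |η|))]
  calc _ ≤ N * η ^ 2 / 2 / (c * η ^ 2 / M) :=
        div_le_div₀ (by positivity) hnum (by positivity) hden
    _ = M * N / (2 * c) := by field_simp

theorem hasDerivAt_integral_inv_norm_chord_sub (hx : ∀ t, HasDerivAt x (x' t) t)
    (hx'c : Continuous x') {a b c C γ₀ : ℝ} {bound : ℝ → ℝ}
    (hchord : ∀ η ∈ Ι a b, η ≠ 0 → ∀ γ, |η| ≤ M * ‖x γ - x (γ - η)‖)
    (hF : ∀ η ∈ Ι a b, η ≠ 0 → |1 / ‖x γ₀ - x (γ₀ - η)‖ - 1 / (c * |η|)| ≤ C)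
    (hbound : ∀ η ∈ Ι a b, η ≠ 0 → ∀ γ,
      |⟪x γ - x (γ - η), x' γ - x' (γ - η)⟫ / ‖x γ - x (γ - η)‖ ^ 3| ≤ bound η)
    (hbound_int : IntervalIntegrable bound volume a b) :
    HasDerivAt (fun γ => ∫ η in a..b, (1 / ‖x γ - x (γ - η)‖ - 1 / (c * |η|)))
      (-∫ η in a..b, ⟪x γ₀ - x (γ₀ - η), x' γ₀ - x' (γ₀ - η)⟫ / ‖x γ₀ - x (γ₀ - η)‖ ^ 3) γ₀ := by
  have hne : ∀ η ∈ Ι a b, η ≠ 0 → ∀ γ, x γ - x (γ - η) ≠ 0 := fun η hη h0 γ hzero => by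
    have := hchord η hη h0 γ
    rw [hzero, norm_zero, mul_zero] at this
    exact h0 (abs_nonpos_iff.mp this)
  have hae : ∀ P : ℝ → Prop, (∀ η ∈ Ι a b, η ≠ 0 → P η) → ∀ᵐ η, η ∈ Ι a b → P η :=
    fun P h => (Measure.ae_ne volume 0).mono fun η h0 hη => h η hη h0
  have hxc : Continuous x := continuous_iff_continuousAt.mpr fun t => (hx t).continuousAt
  have hmeas : ∀ γ, AEStronglyMeasurable (fun η => 1 / ‖x γ - x (γ - η)‖ - 1 / (c * |η|))
      (volume.restrict (Ι a b)) := fun γ =>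
    (((by fun_prop : Continuous fun η => ‖x γ - x (γ - η)‖).measurable.const_div 1).sub
      (by fun_prop : Measurable fun η : ℝ => 1 / (c * |η|))).aestronglyMeasurable
  have hint : IntervalIntegrable (fun η => 1 / ‖x γ₀ - x (γ₀ - η)‖ - 1 / (c * |η|)) volume a b :=
    (intervalIntegrable_const (c := C)).mono_fun' (hmeas γ₀)
      ((ae_restrict_iff' measurableSet_uIoc).mpr (hae _ hF))
  obtain ⟨-, hderiv⟩ := intervalIntegral.hasDerivAt_integral_of_dominated_loc_of_deriv_le
    (F' := fun γ η => -(⟪x γ - x (γ - η), x' γ - x' (γ - η)⟫ / ‖x γ - x (γ - η)‖ ^ 3))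
    Filter.univ_mem (Filter.Eventually.of_forall hmeas) hint
    (by fun_prop : Measurable fun η => -(⟪x γ₀ - x (γ₀ - η), x' γ₀ - x' (γ₀ - η)⟫ /
      ‖x γ₀ - x (γ₀ - η)‖ ^ 3)).aestronglyMeasurable
    (hae _ fun η hη h0 γ _ => by
      simpa only [norm_neg, Real.norm_eq_abs] using hbound η hη h0 γ) hbound_int
    (hae _ fun η hη h0 γ _ => by
      simpa only [one_div, Pi.sub_apply] using
        (((hx γ).sub ((hx (γ - η)).comp_sub_const γ η)).inv_norm (hne η hη h0 γ)).sub_const _)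
  simpa only [intervalIntegral.integral_neg] using hderiv

end Chord

theorem stmt_19_general (x : ℝ → EuclideanSpace ℝ (Fin 2))
    (hx : ContDiff ℝ 2 x)
    (c : ℝ) (hc : 0 < c) (hspeed : ∀ γ : ℝ, ‖deriv x γ‖ = c)
    (horth : ∀ γ : ℝ, inner ℝ (deriv x γ) (iteratedDeriv 2 x γ) = (0 : ℝ))
    (M : ℝ) (hM : 0 < M)
    (harcchord : ∀ γ η : ℝ, η ≠ 0 → |η| ≤ π → |η| ≤ M * ‖x γ - x (γ - η)‖)
    (N : ℝ)
    (hN1 : ∀ γ : ℝ, ‖deriv x γ‖ ≤ N)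
    (hN2 : ∀ γ : ℝ, ‖iteratedDeriv 2 x γ‖ ≤ N)
    (hHol : ∀ a b : ℝ, ‖iteratedDeriv 2 x a - iteratedDeriv 2 x b‖ ≤ N * |a - b| ^ (1/2 : ℝ))
    (A : ℝ → ℝ)
    (hA : ∀ γ : ℝ, A γ =
      ∫ η in (-π)..π, (1 / ‖x γ - x (γ - η)‖ - 1 / (‖deriv x γ‖ * |η|))) :
    ∀ γ : ℝ,
      HasDerivAt A
        (-∫ η in (-π)..π,
          ((inner ℝ (x γ - x (γ - η)) (deriv x γ - deriv x (γ - η)) : ℝ) -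
              (inner ℝ (deriv x γ) (iteratedDeriv 2 x γ) : ℝ) * η ^ 2) /
            ‖x γ - x (γ - η)‖ ^ 3) γ ∧
      |∫ η in (-π)..π,
          ((inner ℝ (x γ - x (γ - η)) (deriv x γ - deriv x (γ - η)) : ℝ) -
              (inner ℝ (deriv x γ) (iteratedDeriv 2 x γ) : ℝ) * η ^ 2) /
            ‖x γ - x (γ - η)‖ ^ 3| ≤ 4 * π * M ^ 3 * N ^ 2 := by
  intro γ₀
  have hdx : ∀ t, HasDerivAt x (deriv x t) t := fun t =>
    (hx.differentiable (by norm_num) t).hasDerivAt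
  have hddx : ∀ t, HasDerivAt (deriv x) (iteratedDeriv 2 x t) t := fun t => by
    rw [iteratedDeriv_succ, iteratedDeriv_one]
    exact (hx.differentiable_deriv_two t).hasDerivAt
  have hchord : ∀ η ∈ Ι (-π) π, η ≠ 0 → ∀ γ, |η| ≤ M * ‖x γ - x (γ - η)‖ :=
    fun η hη h0 γ => by
      rw [uIoc_of_le (by linarith [pi_pos])] at hη
      exact harcchord γ η h0 (abs_le.mpr ⟨hη.1.le, hη.2⟩)
  have hkernel : ∀ η ∈ Ι (-π) π, η ≠ 0 → ∀ γ,
      |⟪x γ - x (γ - η), deriv x γ - deriv x (γ - η)⟫ / ‖x γ - x (γ - η)‖ ^ 3|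
        ≤ M ^ 3 * N ^ 2 * (1 / 2 + |η| ^ (-(1 / 2) : ℝ)) := fun η hη h0 γ =>
    abs_inner_chord_div_norm_chord_pow_three_le hdx hddx (hN1 γ) hN2 hHol (horth γ) hM h0
      (hchord η hη h0 γ)
  have hbound_int : IntervalIntegrable (fun η => M ^ 3 * N ^ 2 * (1 / 2 + |η| ^ (-(1 / 2) : ℝ)))
      volume (-π) π :=
    (intervalIntegrable_const.add (intervalIntegrable_abs_rpow (by norm_num) _ _)).const_mul _
  simp only [horth, zero_mul, sub_zero]
  refine ⟨?_, ?_⟩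
  · have hAeq : A = fun γ => ∫ η in (-π)..π, (1 / ‖x γ - x (γ - η)‖ - 1 / (c * |η|)) :=
      funext fun γ => by rw [hA, hspeed]
    rw [hAeq]
    exact hasDerivAt_integral_inv_norm_chord_sub hdx (hx.continuous_deriv (by norm_num)) hchord
      (fun η hη h0 => abs_inv_norm_chord_sub_le hdx hddx hN2 hc (hspeed γ₀) hM h0
        (hchord η hη h0 γ₀)) hkernel hbound_int
  · rw [mul_assoc (4 * π)]
    exact abs_integral_le_of_abs_le_half_add_abs_rpow_neg_half (by positivity)
      fun η hη h0 => hkernel η hη h0 γ₀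

/-- derivative of A(γ) = ∫ (1/|x(γ)−x(γ−η)| − 1/(|∂x||η|)) dη and its bound. -/
theorem stmt_19 (x : ℝ → EuclideanSpace ℝ (Fin 2))
    (hx : ContDiff ℝ 2 x) (hper : Function.Periodic x (2 * π))
    (c : ℝ) (hc : 0 < c) (hspeed : ∀ γ : ℝ, ‖deriv x γ‖ = c)
    (horth : ∀ γ : ℝ, inner ℝ (deriv x γ) (iteratedDeriv 2 x γ) = (0 : ℝ))
    (M : ℝ) (hM : 0 < M)
    (harcchord : ∀ γ η : ℝ, η ≠ 0 → |η| ≤ π → |η| ≤ M * ‖x γ - x (γ - η)‖)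
    (N : ℝ)
    (hN0 : ∀ γ : ℝ, ‖x γ‖ ≤ N) (hN1 : ∀ γ : ℝ, ‖deriv x γ‖ ≤ N)
    (hN2 : ∀ γ : ℝ, ‖iteratedDeriv 2 x γ‖ ≤ N)
    (hHol : ∀ a b : ℝ, ‖iteratedDeriv 2 x a - iteratedDeriv 2 x b‖ ≤ N * |a - b| ^ (1/2 : ℝ))
    (A : ℝ → ℝ)
    (hA : ∀ γ : ℝ, A γ =
      ∫ η in (-π)..π, (1 / ‖x γ - x (γ - η)‖ - 1 / (‖deriv x γ‖ * |η|))) :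
    ∀ γ : ℝ,
      HasDerivAt A
        (-∫ η in (-π)..π,
          ((inner ℝ (x γ - x (γ - η)) (deriv x γ - deriv x (γ - η)) : ℝ) -
              (inner ℝ (deriv x γ) (iteratedDeriv 2 x γ) : ℝ) * η ^ 2) /
            ‖x γ - x (γ - η)‖ ^ 3) γ ∧
      |∫ η in (-π)..π,
          ((inner ℝ (x γ - x (γ - η)) (deriv x γ - deriv x (γ - η)) : ℝ) -
              (inner ℝ (deriv x γ) (iteratedDeriv 2 x γ) : ℝ) * η ^ 2) /
            ‖x γ - x (γ - η)‖ ^ 3| ≤ 4 * π * M ^ 3 * N ^ 2 :=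
  stmt_19_general x hx c hc hspeed horth M hM harcchord N hN1 hN2 hHol A hA
end
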